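/- arXiv:2106.07859 — 5 statements merged into one kernel-verified Lean document; each statement's English description precedes it below -/
import Mathlib

section
/- Let Z : [0,T] → ℝ be continuous, let σ : [0,T]×E → A be such that t ↦ σ(t,e) is continuous for each e, let u : [0,T]×E → ℝ be continuously differentiable in t and solve the HJB equation u̇(t,e) + Ĥ(t,e,Z_t,u(t,·)) = 0, and let p : [0,T] → ℝ^E be continuously differentiable and solve the Kolmogorov forward equation ṗ(t,e) = Σ_{e'∈E} q_{e',e}(σ(t,e'), Z_t) p(t,e'). Then for every t ∈ [0,T]: d/dt [Σ_{e∈E} p(t,e) u(t,e)] = Σ_{e∈E} p(t,e) [ H(t,e,Z_t,u(t,·),σ(t,e)) − f(t,e,Z_t,σ(t,e)) − Ĥ(t,e,Z_t,u(t,·)) ]. -/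
/-! The pairing `Σ_e p(t,e) u(t,e)` is differentiated by the product rule. Since `p` evolves by
the transposed generator, `ṗ = p Q`, the transport term `(p Q) · u` equals `p · (Q u)` by
associativity of the matrix action, and the HJB equation replaces `u̇` by `-Ĥ`. -/

open Set Matrix

theorem HasDerivWithinAt.dotProduct {ι : Type*} [Fintype ι] {p u : ℝ → ι → ℝ}
    {p' u' : ι → ℝ} {s : Set ℝ} {t : ℝ}
    (hp : ∀ e, HasDerivWithinAt (fun x => p x e) (p' e) s t)
    (hu : ∀ e, HasDerivWithinAt (fun x => u x e) (u' e) s t) :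
    HasDerivWithinAt (fun x => p x ⬝ᵥ u x) (p' ⬝ᵥ u t + p t ⬝ᵥ u') s t :=
  (HasDerivWithinAt.fun_sum (u := Finset.univ) fun e _ => (hp e).fun_mul (hu e)).congr_deriv
    Finset.sum_add_distrib

theorem hasDerivWithinAt_dotProduct_of_deriv_eq_vecMul {ι : Type*} [Fintype ι]
    {p u : ℝ → ι → ℝ} {Q : Matrix ι ι ℝ} {u' : ι → ℝ} {s : Set ℝ} {t : ℝ}
    (hp : ∀ e, HasDerivWithinAt (fun x => p x e) ((p t ᵥ* Q) e) s t)
    (hu : ∀ e, HasDerivWithinAt (fun x => u x e) (u' e) s t) :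
    HasDerivWithinAt (fun x => p x ⬝ᵥ u x) (p t ⬝ᵥ (Q *ᵥ u t + u')) s t := by
  simpa only [dotProduct_add, dotProduct_mulVec] using HasDerivWithinAt.dotProduct hp hu

theorem stmt_1_general (n : ℕ) (T : ℝ)
    (q : Fin n → Fin n → ℝ → ℝ → ℝ)
    (f : ℝ → Fin n → ℝ → ℝ → ℝ)
    (Hhat : ℝ → Fin n → ℝ → (Fin n → ℝ) → ℝ)
    (Z : ℝ → ℝ)
    (σ : ℝ → Fin n → ℝ)
    (u u' : ℝ → Fin n → ℝ)
    (hu : ∀ t ∈ Icc (0:ℝ) T, ∀ e, HasDerivWithinAt (fun s => u s e) (u' t e) (Icc 0 T) t)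
    (hHJB : ∀ t ∈ Icc (0:ℝ) T, ∀ e, u' t e + Hhat t e (Z t) (u t) = 0)
    (p : ℝ → Fin n → ℝ)
    (hp : ∀ t ∈ Icc (0:ℝ) T, ∀ e, HasDerivWithinAt (fun s => p s e)
      (∑ e', q e' e (σ t e') (Z t) * p t e') (Icc 0 T) t) :
    ∀ t ∈ Icc (0:ℝ) T,
      HasDerivWithinAt (fun s => ∑ e, p s e * u s e)
        (∑ e, p t e *
          (((∑ e', q e e' (σ t e) (Z t) * u t e') + f t e (Z t) (σ t e))
            - f t e (Z t) (σ t e) - Hhat t e (Z t) (u t)))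
        (Icc 0 T) t := by
  intro t ht
  set Q : Matrix (Fin n) (Fin n) ℝ := of fun i j => q i j (σ t i) (Z t)
  have hforward : ∀ e, HasDerivWithinAt (fun s => p s e) ((p t ᵥ* Q) e) (Icc 0 T) t := by
    intro e
    simpa only [Q, vecMul, dotProduct, of_apply, mul_comm] using hp t ht e
  refine (hasDerivWithinAt_dotProduct_of_deriv_eq_vecMul hforward (hu t ht)).congr_deriv ?_
  simp only [Q, Pi.add_apply, mulVec, dotProduct, of_apply]
  refine Finset.sum_congr rfl fun e _ => ?_
  rw [eq_neg_of_add_eq_zero_left (hHJB t ht e)]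
  ring

/-- Product-rule identity along the coupled HJB/Kolmogorov system: if `u` solves the HJB
equation `u̇(t,e) + Ĥ(t,e,Z_t,u(t,·)) = 0` and `p` solves the Kolmogorov forward equation
with rates `q_{e',e}(σ(t,e'),Z_t)`, then for every `t ∈ [0,T]`,
`d/dt Σ_e p(t,e)u(t,e) = Σ_e p(t,e)[H(t,e,Z_t,u(t,·),σ(t,e)) − f(t,e,Z_t,σ(t,e)) − Ĥ(t,e,Z_t,u(t,·))]`. -/
theorem stmt_1 (n : ℕ) (hn : 2 ≤ n) (T : ℝ) (hT : 0 < T)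
    (A : Set ℝ) (hA : IsCompact A) (hAne : A.Nonempty)
    (q : Fin n → Fin n → ℝ → ℝ → ℝ)
    (hQmat : ∀ a ∈ A, ∀ z : ℝ, (∀ i j, i ≠ j → 0 ≤ q i j a z) ∧ ∀ i, ∑ j, q i j a z = 0)
    (hqcont : ∀ i j, Continuous fun v : ℝ × ℝ => q i j v.1 v.2)
    (f : ℝ → Fin n → ℝ → ℝ → ℝ)
    (hfcont : ∀ e, Continuous fun v : ℝ × ℝ × ℝ => f v.1 e v.2.1 v.2.2)
    (Hhat : ℝ → Fin n → ℝ → (Fin n → ℝ) → ℝ)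
    (hHhat : ∀ (t : ℝ) (e : Fin n) (z : ℝ) (h : Fin n → ℝ), ∃ a ∈ A,
      Hhat t e z h = (∑ e', q e e' a z * h e') + f t e z a ∧
      ∀ b ∈ A, Hhat t e z h ≤ (∑ e', q e e' b z * h e') + f t e z b)
    (hHhatcont : ∀ e, Continuous fun v : ℝ × ℝ × (Fin n → ℝ) => Hhat v.1 e v.2.1 v.2.2)
    (Z : ℝ → ℝ) (hZ : ContinuousOn Z (Icc 0 T))
    (σ : ℝ → Fin n → ℝ) (hσA : ∀ t ∈ Icc (0:ℝ) T, ∀ e, σ t e ∈ A)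
    (hσcont : ∀ e, ContinuousOn (fun t => σ t e) (Icc 0 T))
    (u u' : ℝ → Fin n → ℝ)
    (hu : ∀ t ∈ Icc (0:ℝ) T, ∀ e, HasDerivWithinAt (fun s => u s e) (u' t e) (Icc 0 T) t)
    (hu'c : ∀ e, ContinuousOn (fun t => u' t e) (Icc 0 T))
    (hHJB : ∀ t ∈ Icc (0:ℝ) T, ∀ e, u' t e + Hhat t e (Z t) (u t) = 0)
    (p : ℝ → Fin n → ℝ)
    (hp : ∀ t ∈ Icc (0:ℝ) T, ∀ e, HasDerivWithinAt (fun s => p s e)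
      (∑ e', q e' e (σ t e') (Z t) * p t e') (Icc 0 T) t) :
    ∀ t ∈ Icc (0:ℝ) T,
      HasDerivWithinAt (fun s => ∑ e, p s e * u s e)
        (∑ e, p t e *
          (((∑ e', q e e' (σ t e) (Z t) * u t e') + f t e (Z t) (σ t e))
            - f t e (Z t) (σ t e) - Hhat t e (Z t) (u t)))
        (Icc 0 T) t :=
  stmt_1_general n T q f Hhat Z σ u u' hu hHJB p hp
end

section
/- (Deterministic form of the verification theorem.) Let Z : [0,T] → ℝ be continuous, let σ : [0,T]×E → A be such that t ↦ σ(t,e) is continuous for each e, let u : [0,T]×E → ℝ be continuously differentiable in t and solve the HJB equation u̇(t,e) + Ĥ(t,e,Z_t,u(t,·)) = 0 with terminal condition u(T,e) = g(e, Z_T), and let p : [0,T] → ℝ^E be continuously differentiable with ṗ(t,e) = Σ_{e'∈E} q_{e',e}(σ(t,e'), Z_t) p(t,e') and with p(0) = p₀ a probability vector (so that p(t) is a probability vector for all t). Then Σ_{e∈E} p₀(e) u(0,e) ≤ ∫₀^T Σ_{e∈E} p(t,e) f(t,e,Z_t,σ(t,e)) dt + Σ_{e∈E} p(T,e) g(e,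 Z_T). (The left-hand side equals the expected optimal cost of the associated jump process and the right-hand side equals its expected cost under the feedback control σ.) -/
open Set

/-!
Along the forward equation `p` stays nonnegative because the generator is a Metzler matrix:
the total negative mass `Σ_e (p t e)⁻` vanishes at `0` and its right Dini derivative is at
most a constant times itself, so Gronwall keeps it at `0`. Duality between the forward and
the backward equation gives `d/dt Σ_e p(t,e) u(t,e) = Σ_e p(t,e) ((Q u)(e) + u̇(t,e))`, and
the HJB equation, with `σ(t,e)` as a competitor in the minimum, bounds this from below by
`-Σ_e p(t,e) f(t,e,Z_t,σ(t,e))`. Integrating over `[0,T]` gives the inequality.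
-/

open Filter Topology

section

variable {ι : Type*} [Fintype ι]

lemma negPart_sub_negPart_le (a b : ℝ) : a⁻ - b⁻ ≤ (a - b)⁻ := by
  rw [sub_le_iff_le_add, negPart_def]
  exact max_le (by linarith [neg_le_negPart (a - b), neg_le_negPart b])
    (add_nonneg (negPart_nonneg _) (negPart_nonneg _))

lemma negPart_mul_of_nonneg {c : ℝ} (hc : 0 ≤ c) (a : ℝ) : (c * a)⁻ = c * a⁻ := by
  simp only [negPart_def, mul_max_of_nonneg _ _ hc, mul_neg, mul_zero]

lemma eventually_slope_sum_negPart_lt {p : ℝ → ι → ℝ} {p' : ι → ℝ} {x r : ℝ}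
    (hp : ∀ i, HasDerivWithinAt (fun t => p t i) (p' i) (Ioi x) x)
    (hr : ∑ i with p x i ≤ 0, (p' i)⁻ < r) :
    ∀ᶠ z in 𝓝[>] x, slope (fun t => ∑ i, (p t i)⁻) x z < r := by
  have hslope : Tendsto (fun z => ∑ i with p x i ≤ 0, (slope (fun t => p t i) x z)⁻) (𝓝[>] x)
      (𝓝 (∑ i with p x i ≤ 0, (p' i)⁻)) :=
    tendsto_finsetSum _ fun i _ => continuous_negPart.continuousAt.tendsto.comp
      ((hasDerivWithinAt_iff_tendsto_slope' (lt_irrefl x)).1 (hp i))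
  have hpos : ∀ᶠ z in 𝓝[>] x, ∀ i, 0 < p x i → 0 < p z i :=
    eventually_all.2 fun i => by
      by_cases hi : 0 < p x i
      · exact ((hp i).continuousWithinAt.eventually (lt_mem_nhds hi)).mono fun z hz _ => hz
      · exact Eventually.of_forall fun z h => absurd h hi
  filter_upwards [hslope.eventually (gt_mem_nhds hr), hpos, self_mem_nhdsWithin]
    with z hz hpz (hxz : x < z)
  have hterm : ∀ i, (p z i)⁻ - (p x i)⁻ ≤ if p x i ≤ 0 then (p z i - p x i)⁻ else 0 := by
    intro i
    split_ifs with hi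
    · exact negPart_sub_negPart_le _ _
    · push Not at hi
      rw [negPart_eq_zero.2 (hpz i hi).le, negPart_eq_zero.2 hi.le, sub_zero]
  have hxz' : 0 ≤ (z - x)⁻¹ := inv_nonneg.2 (sub_nonneg.2 hxz.le)
  calc slope (fun t => ∑ i, (p t i)⁻) x z = (z - x)⁻¹ * ∑ i, ((p z i)⁻ - (p x i)⁻) := by
        rw [slope_def_module, smul_eq_mul, Finset.sum_sub_distrib]
    _ ≤ (z - x)⁻¹ * ∑ i with p x i ≤ 0, (p z i - p x i)⁻ := by
        rw [Finset.sum_filter]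
        exact mul_le_mul_of_nonneg_left (Finset.sum_le_sum fun i _ => hterm i) hxz'
    _ = ∑ i with p x i ≤ 0, (slope (fun t => p t i) x z)⁻ := by
        simp only [Finset.mul_sum, slope_def_module, smul_eq_mul, negPart_mul_of_nonneg hxz']
    _ < r := hz

lemma negPart_sum_mul_le {c : ι → ι → ℝ} {C : ℝ} (hc : ∀ i j, |c i j| ≤ C)
    (hoff : ∀ i j, i ≠ j → 0 ≤ c i j) {v : ι → ℝ} {j : ι} (hj : v j ≤ 0) :
    (∑ i, c i j * v i)⁻ ≤ C * ∑ i, (v i)⁻ := by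
  have hC : 0 ≤ C := (abs_nonneg _).trans (hc j j)
  have hterm : ∀ i, c i j * -v i ≤ C * (v i)⁻ := by
    intro i
    rcases eq_or_ne i j with rfl | hij
    · rw [← negPart_eq_neg.2 hj]
      exact mul_le_mul_of_nonneg_right ((le_abs_self _).trans (hc i i)) (negPart_nonneg _)
    · calc c i j * -v i ≤ c i j * (v i)⁻ :=
            mul_le_mul_of_nonneg_left (neg_le_negPart _) (hoff i j hij)
        _ ≤ C * (v i)⁻ :=
            mul_le_mul_of_nonneg_right ((le_abs_self _).trans (hc i j)) (negPart_nonneg _)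
  rw [negPart_def, Finset.mul_sum, ← Finset.sum_neg_distrib]
  refine max_le (Finset.sum_le_sum fun i _ => by simpa using hterm i) ?_
  exact Finset.sum_nonneg fun i _ => mul_nonneg hC (negPart_nonneg _)

theorem nonneg_of_hasDerivWithinAt_metzler {a b : ℝ} {c : ℝ → ι → ι → ℝ}
    (hc : ∀ i j, ContinuousOn (fun t => c t i j) (Icc a b))
    (hoff : ∀ t ∈ Icc a b, ∀ i j, i ≠ j → 0 ≤ c t i j) {p : ℝ → ι → ℝ}
    (hp : ∀ t ∈ Icc a b, ∀ j,
      HasDerivWithinAt (fun s => p s j) (∑ i, c t i j * p t i) (Icc a b) t)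
    (ha : ∀ i, 0 ≤ p a i) {t : ℝ} (ht : t ∈ Icc a b) (i : ι) : 0 ≤ p t i := by
  obtain ⟨C, hC⟩ : ∃ C, ∀ s ∈ Icc a b, ∀ i j, |c s i j| ≤ C := by
    obtain ⟨C, hC⟩ := isCompact_Icc.exists_bound_of_continuousOn
      (continuousOn_pi.2 fun i => continuousOn_pi.2 fun j => hc i j)
    exact ⟨C, fun s hs i j =>
      (norm_le_pi_norm (c s i) j).trans ((norm_le_pi_norm (c s) i).trans (hC s hs))⟩
  have hC0 : 0 ≤ C := (abs_nonneg _).trans (hC t ht i i)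
  set N : ℝ → ℝ := fun s => ∑ j, (p s j)⁻
  set K : ℝ := Fintype.card ι * C
  have hNc : ContinuousOn N (Icc a b) := continuousOn_finsetSum _ fun j _ =>
    continuous_negPart.comp_continuousOn fun s hs => (hp s hs j).continuousWithinAt
  have hNa : N a ≤ 0 := (Finset.sum_eq_zero fun j _ => negPart_eq_zero.2 (ha j)).le
  have hslope : ∀ x ∈ Ico a b, ∀ r, K * N x < r →
      ∃ᶠ z in 𝓝[>] x, (z - x)⁻¹ * (N z - N x) < r := by
    intro x hx r hr
    have hxI : x ∈ Icc a b := Ico_subset_Icc_self hx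
    have hderiv : ∑ j with p x j ≤ 0, (∑ i, c x i j * p x i)⁻ ≤ K * N x :=
      calc ∑ j with p x j ≤ 0, (∑ i, c x i j * p x i)⁻
          ≤ ∑ j with p x j ≤ 0, C * N x := Finset.sum_le_sum fun j hj =>
            negPart_sum_mul_le (hC x hxI) (hoff x hxI) (Finset.mem_filter.1 hj).2
        _ ≤ ∑ _j, C * N x := Finset.sum_le_sum_of_subset_of_nonneg (Finset.filter_subset _ _)
            fun j _ _ => mul_nonneg hC0 (Finset.sum_nonneg fun j _ => negPart_nonneg _)
        _ = K * N x := by simp [K, mul_assoc]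
    refine (eventually_slope_sum_negPart_lt (fun j => (hp x hxI j).mono_of_mem_nhdsWithin
      (Icc_mem_nhdsGT_of_mem hx)) (hderiv.trans_lt hr)).frequently.mono fun z hz => ?_
    rwa [slope_def_module, smul_eq_mul] at hz
  have hN := le_gronwallBound_of_liminf_deriv_right_le hNc hslope hNa
    (fun x _ => (add_zero (K * N x)).ge) t ht
  rw [gronwallBound_ε0_δ0] at hN
  have hi : (p t i)⁻ ≤ N t :=
    Finset.single_le_sum (f := fun j => (p t j)⁻) (fun j _ => negPart_nonneg _) (Finset.mem_univ i)
  exact negPart_eq_zero.1 (le_antisymm (hi.trans hN) (negPart_nonneg _))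

lemma neg_sum_deriv_pairing_le {q : ι → ι → ℝ} {p u u' f : ι → ℝ} (hp : ∀ i, 0 ≤ p i)
    (hu' : ∀ i, -u' i ≤ ∑ j, q i j * u j + f i) :
    -∑ j, ((∑ i, q i j * p i) * u j + p j * u' j) ≤ ∑ i, p i * f i := by
  have hdual : ∑ j, (∑ i, q i j * p i) * u j = ∑ i, p i * ∑ j, q i j * u j := by
    simp_rw [Finset.sum_mul, Finset.mul_sum]
    rw [Finset.sum_comm]
    exact Finset.sum_congr rfl fun _ _ => Finset.sum_congr rfl fun _ _ => by ring
  rw [Finset.sum_add_distrib, hdual, ← Finset.sum_add_distrib, ← Finset.sum_neg_distrib]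
  refine Finset.sum_le_sum fun i _ => ?_
  have := mul_le_mul_of_nonneg_left (hu' i) (hp i)
  rw [mul_add, mul_neg] at this
  linarith

end

theorem stmt_2_general (n : ℕ) (T : ℝ) (hT : 0 < T)
    (A : Set ℝ)
    (q : Fin n → Fin n → ℝ → ℝ → ℝ)
    (hQmat : ∀ a ∈ A, ∀ z : ℝ, (∀ i j, i ≠ j → 0 ≤ q i j a z) ∧ ∀ i, ∑ j, q i j a z = 0)
    (hqcont : ∀ i j, Continuous fun v : ℝ × ℝ => q i j v.1 v.2)
    (f : ℝ → Fin n → ℝ → ℝ → ℝ)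
    (hfcont : ∀ e, Continuous fun v : ℝ × ℝ × ℝ => f v.1 e v.2.1 v.2.2)
    (g : Fin n → ℝ → ℝ)
    (Hhat : ℝ → Fin n → ℝ → (Fin n → ℝ) → ℝ)
    (hHhat : ∀ (t : ℝ) (e : Fin n) (z : ℝ) (h : Fin n → ℝ), ∃ a ∈ A,
      Hhat t e z h = (∑ e', q e e' a z * h e') + f t e z a ∧
      ∀ b ∈ A, Hhat t e z h ≤ (∑ e', q e e' b z * h e') + f t e z b)
    (Z : ℝ → ℝ) (hZ : ContinuousOn Z (Icc 0 T))
    (σ : ℝ → Fin n → ℝ) (hσA : ∀ t ∈ Icc (0:ℝ) T, ∀ e, σ t e ∈ A)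
    (hσcont : ∀ e, ContinuousOn (fun t => σ t e) (Icc 0 T))
    (u u' : ℝ → Fin n → ℝ)
    (hu : ∀ t ∈ Icc (0:ℝ) T, ∀ e, HasDerivWithinAt (fun s => u s e) (u' t e) (Icc 0 T) t)
    (hHJB : ∀ t ∈ Icc (0:ℝ) T, ∀ e, u' t e + Hhat t e (Z t) (u t) = 0)
    (huT : ∀ e, u T e = g e (Z T))
    (p : ℝ → Fin n → ℝ)
    (hp : ∀ t ∈ Icc (0:ℝ) T, ∀ e, HasDerivWithinAt (fun s => p s e)
      (∑ e', q e' e (σ t e') (Z t) * p t e') (Icc 0 T) t)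
    (hp0pos : ∀ e, 0 ≤ p 0 e) :
    ∑ e, p 0 e * u 0 e ≤
      (∫ t in (0:ℝ)..T, ∑ e, p t e * f t e (Z t) (σ t e)) + ∑ e, p T e * g e (Z T) := by
  have hpos : ∀ t ∈ Icc 0 T, ∀ e, 0 ≤ p t e := fun t ht =>
    nonneg_of_hasDerivWithinAt_metzler (c := fun t e' e => q e' e (σ t e') (Z t))
      (fun e' e => (hqcont e' e).comp_continuousOn ((hσcont e').prodMk hZ))
      (fun t ht e' e => (hQmat _ (hσA t ht e') _).1 e' e) hp hp0pos ht
  have hHJBσ : ∀ t ∈ Icc 0 T, ∀ e,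
      -u' t e ≤ ∑ e', q e e' (σ t e) (Z t) * u t e' + f t e (Z t) (σ t e) := by
    intro t ht e
    obtain ⟨-, -, -, hmin⟩ := hHhat t e (Z t) (u t)
    linarith [hHJB t ht e, hmin _ (hσA t ht e)]
  have hF : ContinuousOn (fun t => ∑ e, p t e * f t e (Z t) (σ t e)) (Icc 0 T) :=
    continuousOn_finsetSum _ fun e _ =>
      ContinuousOn.mul (fun t ht => (hp t ht e).continuousWithinAt)
        ((hfcont e).comp_continuousOn (continuousOn_id.prodMk (hZ.prodMk (hσcont e))))
  have hderiv : ∀ t ∈ Icc 0 T, HasDerivWithinAt (fun s => ∑ e, p s e * u s e)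
      (∑ e, ((∑ e', q e' e (σ t e') (Z t) * p t e') * u t e + p t e * u' t e)) (Icc 0 T) t :=
    fun t ht => HasDerivWithinAt.fun_sum fun e _ => (hp t ht e).mul (hu t ht e)
  have hverif := intervalIntegral.sub_le_integral_of_hasDeriv_right_of_le hT.le
    (fun t ht => (hderiv t ht).continuousWithinAt.neg)
    (fun t ht => ((hderiv t (Ioo_subset_Icc_self ht)).neg).mono_of_mem_nhdsWithin
      (Icc_mem_nhdsGT_of_mem (Ioo_subset_Ico_self ht)))
    hF.integrableOn_Icc
    (fun t ht => neg_sum_deriv_pairing_le (hpos t (Ioo_subset_Icc_self ht))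
      (hHJBσ t (Ioo_subset_Icc_self ht)))
  simp only [Pi.neg_apply, huT] at hverif
  linarith

/-- Deterministic form of the verification theorem: along any admissible feedback `σ`,
`Σ_e p₀(e)u(0,e) ≤ ∫₀^T Σ_e p(t,e) f(t,e,Z_t,σ(t,e)) dt + Σ_e p(T,e) g(e,Z_T)`,
where `u` solves the HJB equation with terminal datum `g(·,Z_T)` and `p` solves the
Kolmogorov forward equation driven by `σ` starting from the probability vector `p₀`. -/
theorem stmt_2 (n : ℕ) (hn : 2 ≤ n) (T : ℝ) (hT : 0 < T)
    (A : Set ℝ) (hA : IsCompact A) (hAne : A.Nonempty)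
    (q : Fin n → Fin n → ℝ → ℝ → ℝ)
    (hQmat : ∀ a ∈ A, ∀ z : ℝ, (∀ i j, i ≠ j → 0 ≤ q i j a z) ∧ ∀ i, ∑ j, q i j a z = 0)
    (hqcont : ∀ i j, Continuous fun v : ℝ × ℝ => q i j v.1 v.2)
    (f : ℝ → Fin n → ℝ → ℝ → ℝ)
    (hfcont : ∀ e, Continuous fun v : ℝ × ℝ × ℝ => f v.1 e v.2.1 v.2.2)
    (g : Fin n → ℝ → ℝ)
    (Hhat : ℝ → Fin n → ℝ → (Fin n → ℝ) → ℝ)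
    (hHhat : ∀ (t : ℝ) (e : Fin n) (z : ℝ) (h : Fin n → ℝ), ∃ a ∈ A,
      Hhat t e z h = (∑ e', q e e' a z * h e') + f t e z a ∧
      ∀ b ∈ A, Hhat t e z h ≤ (∑ e', q e e' b z * h e') + f t e z b)
    (hHhatcont : ∀ e, Continuous fun v : ℝ × ℝ × (Fin n → ℝ) => Hhat v.1 e v.2.1 v.2.2)
    (Z : ℝ → ℝ) (hZ : ContinuousOn Z (Icc 0 T))
    (σ : ℝ → Fin n → ℝ) (hσA : ∀ t ∈ Icc (0:ℝ) T, ∀ e, σ t e ∈ A)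
    (hσcont : ∀ e, ContinuousOn (fun t => σ t e) (Icc 0 T))
    (u u' : ℝ → Fin n → ℝ)
    (hu : ∀ t ∈ Icc (0:ℝ) T, ∀ e, HasDerivWithinAt (fun s => u s e) (u' t e) (Icc 0 T) t)
    (hu'c : ∀ e, ContinuousOn (fun t => u' t e) (Icc 0 T))
    (hHJB : ∀ t ∈ Icc (0:ℝ) T, ∀ e, u' t e + Hhat t e (Z t) (u t) = 0)
    (huT : ∀ e, u T e = g e (Z T))
    (p : ℝ → Fin n → ℝ)
    (hp : ∀ t ∈ Icc (0:ℝ) T, ∀ e, HasDerivWithinAt (fun s => p s e)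
      (∑ e', q e' e (σ t e') (Z t) * p t e') (Icc 0 T) t)
    (hp0pos : ∀ e, 0 ≤ p 0 e) (hp0sum : ∑ e, p 0 e = 1) :
    ∑ e, p 0 e * u 0 e ≤
      (∫ t in (0:ℝ)..T, ∑ e, p t e * f t e (Z t) (σ t e)) + ∑ e, p T e * g e (Z T) :=
  stmt_2_general n T hT A q hQmat hqcont f hfcont g Hhat hHhat Z hZ σ hσA hσcont u u' hu hHJB huT p
    hp hp0pos
end

section
/- (Regularity of the optimal control.) Assume A ⊂ ℝ is a compact interval, Q(a,z) = Q₁(z) + a Q₂(z) with Q₂ locally Lipschitz, a ↦ f(t,e,z,a) is continuously differentiable and λ-strongly convex uniformly in (t,e,z), and (t,z) ↦ ∂_a f(t,e,z,a) is locally Lipschitz uniformly in (a,e). Then for every e ∈ E the map (t,z,h) ↦ â_e(t,z,h) is continuous on [0,T]×ℝ×ℝ^E; moreover it is locally Lipschitz continuous, i.e., for all positive constants C_z and C_h, the map (t,z,h) ↦ â_e(t,z,h) is Lipschitz continuous on [0,T] × [−C_z, C_z] × [−C_h, C_h]^E (with a Lipschitz constant possibly depending on T, C_z, C_h). -/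
open Set

/-!
The objective `a ↦ 1_e Q(a,z) h + f(t,e,z,a)` is an affine function of `a` plus a
`lam`-strongly convex one, hence `lam`-strongly convex. At a minimizer `a` of a `lam`-strongly
convex `g`, the midpoint inequality gives the quadratic growth `g a + lam/4 ‖a - b‖² ≤ g b`;
adding this for two such functions `g₁, g₂` with minimizers `a₁, a₂` shows
`lam/2 ‖a₁ - a₂‖ ≤ D` whenever `g₁ - g₂` is `D`-Lipschitz. For the objectives at `(t,z,h)` and
`(t',z',h')`, the slope of the affine part changes by at most a multiple of `|z - z'| + |h - h'|`
(local Lipschitz continuity and boundedness of `Q₂`), and by the mean value theorem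
`f(t,e,z,·) - f(t',e,z',·)` is Lipschitz with constant a multiple of `|t - t'| + |z - z'|`.
Local Lipschitz continuity then gives continuity.
-/

section StrongConvexity

variable {E : Type*} [NormedAddCommGroup E] [NormedSpace ℝ E] {s : Set E} {m : ℝ}

theorem StrongConvexOn.add_sq_le_of_isMinOn {g : E → ℝ} {a b : E} (hg : StrongConvexOn s m g)
    (hmin : IsMinOn g s a) (ha : a ∈ s) (hb : b ∈ s) :
    g a + m / 4 * ‖a - b‖ ^ 2 ≤ g b := by
  have half : (0 : ℝ) ≤ 1 / 2 := by norm_num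
  have hmid := hg.2 ha hb half half (by norm_num)
  have hle := isMinOn_iff.1 hmin _ (hg.1 ha hb half half (by norm_num))
  simp only [smul_eq_mul] at hmid
  linarith

theorem StrongConvexOn.half_mul_norm_sub_le_of_isMinOn {g₁ g₂ : E → ℝ} {a₁ a₂ : E} {D : ℝ}
    (hg₁ : StrongConvexOn s m g₁) (hg₂ : StrongConvexOn s m g₂)
    (hmin₁ : IsMinOn g₁ s a₁) (hmin₂ : IsMinOn g₂ s a₂) (ha₁ : a₁ ∈ s) (ha₂ : a₂ ∈ s)
    (hD₀ : 0 ≤ D) (hD : (g₁ a₂ - g₂ a₂) - (g₁ a₁ - g₂ a₁) ≤ D * ‖a₁ - a₂‖) :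
    m / 2 * ‖a₁ - a₂‖ ≤ D := by
  have h₁ := hg₁.add_sq_le_of_isMinOn hmin₁ ha₁ ha₂
  have h₂ := hg₂.add_sq_le_of_isMinOn hmin₂ ha₂ ha₁
  rw [norm_sub_rev] at h₂
  rcases (norm_nonneg (a₁ - a₂)).eq_or_lt with h₀ | hpos
  · rw [← h₀, mul_zero]; exact hD₀
  · refine le_of_mul_le_mul_right ?_ hpos
    nlinarith

end StrongConvexity

theorem strongConvexOn_affine_add {s : Set ℝ} {m c S : ℝ} {φ : ℝ → ℝ}
    (hφ : ConvexOn ℝ s fun x => φ x - m / 2 * x ^ 2) :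
    StrongConvexOn s m fun x => c + x * S + φ x := by
  rw [strongConvexOn_iff_convex]
  have haff : ConvexOn ℝ s fun x => c + x * S :=
    (convexOn_const c hφ.1).add ((LinearMap.mulRight ℝ S).convexOn hφ.1)
  refine (haff.add hφ).congr fun x _ => ?_
  simp only [Real.norm_eq_abs, sq_abs, Pi.add_apply]
  ring

theorem half_mul_abs_sub_le_of_isMinOn_affine_add {s : Set ℝ} {m c₁ c₂ S₁ S₂ K a₁ a₂ : ℝ}
    {φ₁ φ₂ φ₁' φ₂' : ℝ → ℝ}
    (hφ₁ : ConvexOn ℝ s fun x => φ₁ x - m / 2 * x ^ 2)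
    (hφ₂ : ConvexOn ℝ s fun x => φ₂ x - m / 2 * x ^ 2)
    (hφ₁' : ∀ x ∈ s, HasDerivWithinAt φ₁ (φ₁' x) s x)
    (hφ₂' : ∀ x ∈ s, HasDerivWithinAt φ₂ (φ₂' x) s x)
    (hK : ∀ x ∈ s, |φ₁' x - φ₂' x| ≤ K)
    (hmin₁ : IsMinOn (fun x => c₁ + x * S₁ + φ₁ x) s a₁)
    (hmin₂ : IsMinOn (fun x => c₂ + x * S₂ + φ₂ x) s a₂) (ha₁ : a₁ ∈ s) (ha₂ : a₂ ∈ s) :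
    m / 2 * |a₁ - a₂| ≤ |S₁ - S₂| + K := by
  have hφ : |(φ₁ a₂ - φ₂ a₂) - (φ₁ a₁ - φ₂ a₁)| ≤ K * |a₂ - a₁| := by
    simpa only [Real.norm_eq_abs] using Convex.norm_image_sub_le_of_norm_hasDerivWithin_le
      (f := fun x => φ₁ x - φ₂ x) (fun x hx => (hφ₁' x hx).sub (hφ₂' x hx))
      (fun x hx => by simpa only [Real.norm_eq_abs] using hK x hx) hφ₁.1 ha₁ ha₂
  have hS : (S₁ - S₂) * (a₂ - a₁) ≤ |S₁ - S₂| * |a₁ - a₂| := by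
    rw [abs_sub_comm a₁, ← abs_mul]; exact le_abs_self _
  refine (strongConvexOn_affine_add hφ₁).half_mul_norm_sub_le_of_isMinOn
    (strongConvexOn_affine_add hφ₂) hmin₁ hmin₂ ha₁ ha₂
    (add_nonneg (abs_nonneg _) ((abs_nonneg _).trans (hK a₁ ha₁))) ?_
  rw [Real.norm_eq_abs, abs_sub_comm a₁] at *
  linarith [le_abs_self ((φ₁ a₂ - φ₂ a₂) - (φ₁ a₁ - φ₂ a₁))]

theorem abs_sum_mul_sub_sum_mul_le {ι : Type*} [Fintype ι] {u u' h h' : ι → ℝ} {A B C d : ℝ}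
    (hu : ∀ i, |u i - u' i| ≤ A) (hu' : ∀ i, |u' i| ≤ B) (hh : ∀ i, |h i| ≤ C)
    (hd : ∀ i, |h i - h' i| ≤ d) :
    |∑ i, u i * h i - ∑ i, u' i * h' i| ≤ Fintype.card ι * (A * C + B * d) := by
  have hterm : ∀ i, |u i * h i - u' i * h' i| ≤ A * C + B * d := fun i => calc
    |u i * h i - u' i * h' i| = |(u i - u' i) * h i + u' i * (h i - h' i)| := by ring_nf
    _ ≤ |u i - u' i| * |h i| + |u' i| * |h i - h' i| := by
      rw [← abs_mul, ← abs_mul]; exact abs_add_le _ _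
    _ ≤ A * C + B * d :=
      add_le_add (mul_le_mul (hu i) (hh i) (abs_nonneg _) ((abs_nonneg _).trans (hu i)))
        (mul_le_mul (hu' i) (hd i) (abs_nonneg _) ((abs_nonneg _).trans (hu' i)))
  calc |∑ i, u i * h i - ∑ i, u' i * h' i| = |∑ i, (u i * h i - u' i * h' i)| := by
        rw [Finset.sum_sub_distrib]
    _ ≤ ∑ i, |u i * h i - u' i * h' i| := Finset.abs_sum_le_sum_abs _ _
    _ ≤ ∑ _i : ι, (A * C + B * d) := Finset.sum_le_sum fun i _ => hterm i
    _ = Fintype.card ι * (A * C + B * d) := by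
      rw [Finset.sum_const, Finset.card_univ, nsmul_eq_mul]

theorem abs_apply_le_of_lipschitzOn_Icc {ι κ : Type*} [Fintype ι] [Fintype κ]
    {Q : ℝ → ι → κ → ℝ} {R L : ℝ} (hR : 0 ≤ R)
    (hQ : ∀ i j, ∀ z ∈ Icc (-R) R, ∀ z' ∈ Icc (-R) R, |Q z i j - Q z' i j| ≤ L * |z - z'|) :
    ∀ z ∈ Icc (-R) R, ∀ i j, |Q z i j| ≤ ‖Q 0‖ + |L| * R := fun z hz i j => by
  have h₀ : |Q 0 i j| ≤ ‖Q 0‖ := by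
    simpa only [Real.norm_eq_abs] using (norm_le_pi_norm (Q 0 i) j).trans (norm_le_pi_norm _ i)
  have hz₀ : |Q z i j - Q 0 i j| ≤ |L| * R := calc
    _ ≤ L * |z - 0| := hQ i j z hz 0 ⟨by linarith, hR⟩
    _ ≤ |L| * R := by
      rw [sub_zero]; exact mul_le_mul (le_abs_self _) (abs_le.2 hz) (abs_nonneg _) (abs_nonneg _)
  linarith [abs_sub_abs_le_abs_sub (Q z i j) (Q 0 i j)]

section ProductDist

variable {ι : Type*} [Fintype ι]

theorem abs_sub_add_abs_sub_add_iSup_le_three_mul_dist (v w : ℝ × ℝ × (ι → ℝ)) :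
    |v.1 - w.1| + |v.2.1 - w.2.1| + ⨆ i, |v.2.2 i - w.2.2 i| ≤ 3 * dist v w := by
  have h₁ : dist v.1 w.1 ≤ dist v w := by rw [Prod.dist_eq]; exact le_max_left _ _
  have h₂₃ : dist v.2 w.2 ≤ dist v w := by rw [Prod.dist_eq]; exact le_max_right _ _
  have h₂ : dist v.2.1 w.2.1 ≤ dist v.2 w.2 := by rw [Prod.dist_eq]; exact le_max_left _ _
  have h₃ : dist v.2.2 w.2.2 ≤ dist v.2 w.2 := by rw [Prod.dist_eq]; exact le_max_right _ _
  have h₃' : ⨆ i, |v.2.2 i - w.2.2 i| ≤ dist v.2.2 w.2.2 :=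
    Real.iSup_le (fun i => dist_le_pi_dist v.2.2 w.2.2 i) dist_nonneg
  rw [Real.dist_eq] at h₁ h₂
  linarith

theorem abs_snd_fst_le_of_mem_closedBall {v w : ℝ × ℝ × (ι → ℝ)}
    (hw : w ∈ Metric.closedBall v 1) : |w.2.1| ≤ |v.2.1| + 1 := by
  have h : dist w.2.1 v.2.1 ≤ 1 :=
    (show dist w.2.1 v.2.1 ≤ dist w v by
      rw [Prod.dist_eq, Prod.dist_eq]; exact (le_max_left _ _).trans (le_max_right _ _)).trans hw
  rw [Real.dist_eq] at h
  linarith [abs_sub_abs_le_abs_sub w.2.1 v.2.1]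

theorem abs_snd_snd_le_of_mem_closedBall {v w : ℝ × ℝ × (ι → ℝ)}
    (hw : w ∈ Metric.closedBall v 1) (i : ι) : |w.2.2 i| ≤ ‖v.2.2‖ + 1 := by
  have h : dist (w.2.2 i) (v.2.2 i) ≤ 1 :=
    ((dist_le_pi_dist _ _ i).trans (show dist w.2.2 v.2.2 ≤ dist w v by
      rw [Prod.dist_eq, Prod.dist_eq]; exact (le_max_right _ _).trans (le_max_right _ _))).trans hw
  rw [Real.dist_eq] at h
  have hv : |v.2.2 i| ≤ ‖v.2.2‖ := by simpa only [Real.norm_eq_abs] using norm_le_pi_norm v.2.2 i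
  linarith [abs_sub_abs_le_abs_sub (w.2.2 i) (v.2.2 i)]

end ProductDist

theorem continuousOn_of_lipschitz_on_boxes {ι : Type*} [Fintype ι] {s : Set ℝ}
    {F : ℝ → ℝ → (ι → ℝ) → ℝ}
    (hF : ∀ Cz > (0:ℝ), ∀ Ch > (0:ℝ), ∃ L : ℝ,
        ∀ t ∈ s, ∀ t' ∈ s, ∀ z ∈ Icc (-Cz) Cz, ∀ z' ∈ Icc (-Cz) Cz,
        ∀ h h' : ι → ℝ, (∀ i, |h i| ≤ Ch) → (∀ i, |h' i| ≤ Ch) →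
          |F t z h - F t' z' h'| ≤ L * (|t - t'| + |z - z'| + ⨆ i, |h i - h' i|)) :
    ContinuousOn (fun v : ℝ × ℝ × (ι → ℝ) => F v.1 v.2.1 v.2.2) (s ×ˢ univ ×ˢ univ) := by
  refine LocallyLipschitzOn.continuousOn fun v _ => ?_
  obtain ⟨L, hL⟩ := hF (|v.2.1| + 1) (by positivity) (‖v.2.2‖ + 1) (by positivity)
  refine ⟨Real.toNNReal (3 * |L|), _,
    inter_mem_nhdsWithin _ (Metric.closedBall_mem_nhds v one_pos), LipschitzOnWith.of_dist_le' ?_⟩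
  rintro w ⟨⟨hw₁, -⟩, hw⟩ w' ⟨⟨hw₁', -⟩, hw'⟩
  calc dist (F w.1 w.2.1 w.2.2) (F w'.1 w'.2.1 w'.2.2)
      ≤ L * (|w.1 - w'.1| + |w.2.1 - w'.2.1| + ⨆ i, |w.2.2 i - w'.2.2 i|) :=
        hL _ hw₁ _ hw₁' _ (abs_le.1 (abs_snd_fst_le_of_mem_closedBall hw))
          _ (abs_le.1 (abs_snd_fst_le_of_mem_closedBall hw')) _ _
          (abs_snd_snd_le_of_mem_closedBall hw) (abs_snd_snd_le_of_mem_closedBall hw')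
    _ ≤ |L| * (3 * dist w w') :=
      mul_le_mul (le_abs_self L) (abs_sub_add_abs_sub_add_iSup_le_three_mul_dist w w')
        (by have := Real.iSup_nonneg fun i => abs_nonneg (w.2.2 i - w'.2.2 i); positivity)
        (abs_nonneg L)
    _ = 3 * |L| * dist w w' := by ring

section Hamiltonian

variable {n : ℕ} {A : Set ℝ} {lam : ℝ} {q : Fin n → Fin n → ℝ → ℝ → ℝ}
  {Q1 Q2 : ℝ → Fin n → Fin n → ℝ} {f fa : ℝ → Fin n → ℝ → ℝ → ℝ}
  {ahat : ℝ → Fin n → ℝ → (Fin n → ℝ) → ℝ}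

theorem isMinOn_affine_add_of_hamiltonian_le
    (hqdecomp : ∀ i j (a z : ℝ), q i j a z = Q1 z i j + a * Q2 z i j)
    {φ : ℝ → ℝ} {e : Fin n} {z a : ℝ} {h : Fin n → ℝ}
    (hmin : ∀ b ∈ A, (∑ e', q e e' a z * h e') + φ a ≤ (∑ e', q e e' b z * h e') + φ b) :
    IsMinOn (fun x => (∑ e', Q1 z e e' * h e') + x * (∑ e', Q2 z e e' * h e') + φ x) A a := by
  have hsum : ∀ b, ∑ e', q e e' b z * h e' =
      (∑ e', Q1 z e e' * h e') + b * (∑ e', Q2 z e e' * h e') := fun b => by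
    simp only [hqdecomp, add_mul, Finset.sum_add_distrib, Finset.mul_sum, mul_assoc]
  exact isMinOn_iff.2 fun b hb => by simpa only [hsum] using hmin b hb

theorem half_mul_abs_ahat_sub_le
    (hqdecomp : ∀ i j (a z : ℝ), q i j a z = Q1 z i j + a * Q2 z i j)
    (hfa : ∀ t e z, ∀ a ∈ A, HasDerivWithinAt (fun b => f t e z b) (fa t e z a) A a)
    (hconv : ∀ t e z, ConvexOn ℝ A (fun a => f t e z a - lam / 2 * a ^ 2))
    (hahat : ∀ (t : ℝ) (e : Fin n) (z : ℝ) (h : Fin n → ℝ), ahat t e z h ∈ A ∧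
      ∀ b ∈ A, (∑ e', q e e' (ahat t e z h) z * h e') + f t e z (ahat t e z h) ≤
        (∑ e', q e e' b z * h e') + f t e z b)
    (e : Fin n) (t t' z z' : ℝ) (h h' : Fin n → ℝ) {K : ℝ}
    (hK : ∀ a ∈ A, |fa t e z a - fa t' e z' a| ≤ K) :
    lam / 2 * |ahat t e z h - ahat t' e z' h'| ≤
      |∑ e', Q2 z e e' * h e' - ∑ e', Q2 z' e e' * h' e'| + K :=
  half_mul_abs_sub_le_of_isMinOn_affine_add (hconv t e z) (hconv t' e z') (hfa t e z)
    (hfa t' e z') hK (isMinOn_affine_add_of_hamiltonian_le hqdecomp (hahat t e z h).2)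
    (isMinOn_affine_add_of_hamiltonian_le hqdecomp (hahat t' e z' h').2)
    (hahat t e z h).1 (hahat t' e z' h').1

theorem ahat_lipschitz_on_boxes {I : Set ℝ}
    (hqdecomp : ∀ i j (a z : ℝ), q i j a z = Q1 z i j + a * Q2 z i j)
    (hQ2lip : ∀ R > (0:ℝ), ∃ L : ℝ, ∀ i j, ∀ z ∈ Icc (-R) R, ∀ z' ∈ Icc (-R) R,
      |Q2 z i j - Q2 z' i j| ≤ L * |z - z'|)
    (hfa : ∀ t e z, ∀ a ∈ A, HasDerivWithinAt (fun b => f t e z b) (fa t e z a) A a)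
    (hlam : 0 < lam)
    (hconv : ∀ t e z, ConvexOn ℝ A (fun a => f t e z a - lam / 2 * a ^ 2))
    (hfalip : ∀ R > (0:ℝ), ∃ L : ℝ, ∀ e, ∀ a ∈ A,
      ∀ t ∈ I, ∀ t' ∈ I, ∀ z ∈ Icc (-R) R, ∀ z' ∈ Icc (-R) R,
        |fa t e z a - fa t' e z' a| ≤ L * (|t - t'| + |z - z'|))
    (hahat : ∀ (t : ℝ) (e : Fin n) (z : ℝ) (h : Fin n → ℝ), ahat t e z h ∈ A ∧
      ∀ b ∈ A, (∑ e', q e e' (ahat t e z h) z * h e') + f t e z (ahat t e z h) ≤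
        (∑ e', q e e' b z * h e') + f t e z b)
    (e : Fin n) :
    ∀ Cz > (0:ℝ), ∀ Ch > (0:ℝ), ∃ L : ℝ,
      ∀ t ∈ I, ∀ t' ∈ I, ∀ z ∈ Icc (-Cz) Cz, ∀ z' ∈ Icc (-Cz) Cz,
      ∀ h h' : Fin n → ℝ, (∀ e', |h e'| ≤ Ch) → (∀ e', |h' e'| ≤ Ch) →
        |ahat t e z h - ahat t' e z' h'| ≤
          L * (|t - t'| + |z - z'| + ⨆ e' : Fin n, |h e' - h' e'|) := by
  intro Cz hCz Ch hCh
  obtain ⟨LQ, hLQ⟩ := hQ2lip Cz hCz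
  obtain ⟨Lf, hLf⟩ := hfalip Cz hCz
  set M := ‖Q2 0‖ + |LQ| * Cz
  have hQ2bd := abs_apply_le_of_lipschitzOn_Icc hCz.le hLQ
  refine ⟨2 / lam * (n * (|LQ| * Ch + M) + |Lf|),
    fun t ht t' ht' z hz z' hz' h h' hh _ => ?_⟩
  set d := ⨆ e', |h e' - h' e'|
  have hd : ∀ e', |h e' - h' e'| ≤ d := fun e' =>
    le_ciSup (f := fun e' => |h e' - h' e'|) (Set.finite_range _).bddAbove e'
  have hS := abs_sum_mul_sub_sum_mul_le
    (fun e' => (hLQ e e' z hz z' hz').trans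
      (mul_le_mul_of_nonneg_right (le_abs_self LQ) (abs_nonneg (z - z'))))
    (hQ2bd z' hz' e) hh hd
  rw [Fintype.card_fin] at hS
  have hmin := half_mul_abs_ahat_sub_le hqdecomp hfa hconv hahat e t t' z z' h h'
    (K := |Lf| * (|t - t'| + |z - z'|)) fun a ha => (hLf e a ha t ht t' ht' z hz z' hz').trans
      (mul_le_mul_of_nonneg_right (le_abs_self Lf) (by positivity))
  have hd₀ : 0 ≤ d := Real.iSup_nonneg fun e' => abs_nonneg _
  have hM₀ : 0 ≤ M := (abs_nonneg _).trans (hQ2bd z hz e e)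
  have key : lam / 2 * |ahat t e z h - ahat t' e z' h'| ≤
      (n * (|LQ| * Ch + M) + |Lf|) * (|t - t'| + |z - z'| + d) := by
    have hn₀ : (0:ℝ) ≤ n := n.cast_nonneg
    nlinarith [mul_nonneg (mul_nonneg hn₀ (mul_nonneg (abs_nonneg LQ) hCh.le))
        (add_nonneg (abs_nonneg (t - t')) hd₀),
      mul_nonneg (mul_nonneg hn₀ hM₀) (add_nonneg (abs_nonneg (t - t')) (abs_nonneg (z - z'))),
      mul_nonneg (abs_nonneg Lf) hd₀]
  calc |ahat t e z h - ahat t' e z' h'|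
      = 2 / lam * (lam / 2 * |ahat t e z h - ahat t' e z' h'|) := by field_simp
    _ ≤ 2 / lam * ((n * (|LQ| * Ch + M) + |Lf|) * (|t - t'| + |z - z'| + d)) := by gcongr
    _ = _ := by ring

end Hamiltonian

theorem stmt_4_general (n : ℕ) (T : ℝ)
    (lo hi : ℝ)
    (q : Fin n → Fin n → ℝ → ℝ → ℝ)
    -- Condition 3 (i): Q(a,z) = Q₁(z) + a Q₂(z), with Q₂ locally Lipschitz
    (Q1 Q2 : ℝ → Fin n → Fin n → ℝ)
    (hqdecomp : ∀ i j (a z : ℝ), q i j a z = Q1 z i j + a * Q2 z i j)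
    (hQ2lip : ∀ R > (0:ℝ), ∃ L : ℝ, ∀ i j, ∀ z ∈ Icc (-R) R, ∀ z' ∈ Icc (-R) R,
      |Q2 z i j - Q2 z' i j| ≤ L * |z - z'|)
    -- Condition 3 (ii): regularity and strong convexity of the running cost in the action
    (f fa : ℝ → Fin n → ℝ → ℝ → ℝ)
    (hfa : ∀ t e z, ∀ a ∈ Icc lo hi,
      HasDerivWithinAt (fun b => f t e z b) (fa t e z a) (Icc lo hi) a)
    (lam : ℝ) (hlam : 0 < lam)
    (hconv : ∀ t e z, ConvexOn ℝ (Icc lo hi) (fun a => f t e z a - lam / 2 * a ^ 2))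
    (hfalip : ∀ R > (0:ℝ), ∃ L : ℝ, ∀ e, ∀ a ∈ Icc lo hi,
      ∀ t ∈ Icc (0:ℝ) T, ∀ t' ∈ Icc (0:ℝ) T, ∀ z ∈ Icc (-R) R, ∀ z' ∈ Icc (-R) R,
        |fa t e z a - fa t' e z' a| ≤ L * (|t - t'| + |z - z'|))
    -- `ahat t e z h` is the minimizer over `A` of the Hamiltonian
    (ahat : ℝ → Fin n → ℝ → (Fin n → ℝ) → ℝ)
    (hahat : ∀ (t : ℝ) (e : Fin n) (z : ℝ) (h : Fin n → ℝ), ahat t e z h ∈ Icc lo hi ∧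
      ∀ b ∈ Icc lo hi,
        (∑ e', q e e' (ahat t e z h) z * h e') + f t e z (ahat t e z h) ≤
        (∑ e', q e e' b z * h e') + f t e z b) :
    ∀ e : Fin n,
      ContinuousOn (fun v : ℝ × ℝ × (Fin n → ℝ) => ahat v.1 e v.2.1 v.2.2)
        (Icc (0:ℝ) T ×ˢ (univ : Set ℝ) ×ˢ (univ : Set (Fin n → ℝ))) ∧
      ∀ Cz > (0:ℝ), ∀ Ch > (0:ℝ), ∃ L : ℝ,
        ∀ t ∈ Icc (0:ℝ) T, ∀ t' ∈ Icc (0:ℝ) T,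
        ∀ z ∈ Icc (-Cz) Cz, ∀ z' ∈ Icc (-Cz) Cz,
        ∀ h h' : Fin n → ℝ, (∀ e', |h e'| ≤ Ch) → (∀ e', |h' e'| ≤ Ch) →
          |ahat t e z h - ahat t' e z' h'| ≤
            L * (|t - t'| + |z - z'| + ⨆ e' : Fin n, |h e' - h' e'|) := by
  intro e
  have hlip := ahat_lipschitz_on_boxes hqdecomp hQ2lip hfa hlam hconv hfalip hahat e
  exact ⟨continuousOn_of_lipschitz_on_boxes hlip, hlip⟩

/-- Regularity of the optimal control: under Condition 3 (affine dependence of the rates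
on the action with locally Lipschitz `Q₂`, and a running cost that is continuously
differentiable and `lam`-strongly convex in the action with `(t,z) ↦ ∂_a f` locally
Lipschitz uniformly in `(a,e)`), the Hamiltonian minimizer `â_e(t,z,h)` is continuous on
`[0,T]×ℝ×ℝ^E` and locally Lipschitz: Lipschitz on `[0,T]×[−C_z,C_z]×[−C_h,C_h]^E` for all
`C_z, C_h > 0`. -/
theorem stmt_4 (n : ℕ) (hn : 2 ≤ n) (T : ℝ) (hT : 0 < T)
    (lo hi : ℝ) (hA : lo ≤ hi)
    (q : Fin n → Fin n → ℝ → ℝ → ℝ) (qmax : ℝ)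
    (hqmax : ∀ i j z, ∀ a ∈ Icc lo hi, |q i j a z| ≤ qmax)
    (hQmat : ∀ a ∈ Icc lo hi, ∀ z : ℝ,
      (∀ i j, i ≠ j → 0 ≤ q i j a z) ∧ ∀ i, ∑ j, q i j a z = 0)
    -- Condition 3 (i): Q(a,z) = Q₁(z) + a Q₂(z), with Q₂ locally Lipschitz
    (Q1 Q2 : ℝ → Fin n → Fin n → ℝ)
    (hqdecomp : ∀ i j (a z : ℝ), q i j a z = Q1 z i j + a * Q2 z i j)
    (hQ2lip : ∀ R > (0:ℝ), ∃ L : ℝ, ∀ i j, ∀ z ∈ Icc (-R) R, ∀ z' ∈ Icc (-R) R,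
      |Q2 z i j - Q2 z' i j| ≤ L * |z - z'|)
    -- Condition 3 (ii): regularity and strong convexity of the running cost in the action
    (f fa : ℝ → Fin n → ℝ → ℝ → ℝ)
    (hfa : ∀ t e z, ∀ a ∈ Icc lo hi,
      HasDerivWithinAt (fun b => f t e z b) (fa t e z a) (Icc lo hi) a)
    (hfaC : ∀ t e z, ContinuousOn (fun a => fa t e z a) (Icc lo hi))
    (lam : ℝ) (hlam : 0 < lam)
    (hconv : ∀ t e z, ConvexOn ℝ (Icc lo hi) (fun a => f t e z a - lam / 2 * a ^ 2))
    (hfalip : ∀ R > (0:ℝ), ∃ L : ℝ, ∀ e, ∀ a ∈ Icc lo hi,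
      ∀ t ∈ Icc (0:ℝ) T, ∀ t' ∈ Icc (0:ℝ) T, ∀ z ∈ Icc (-R) R, ∀ z' ∈ Icc (-R) R,
        |fa t e z a - fa t' e z' a| ≤ L * (|t - t'| + |z - z'|))
    -- `ahat t e z h` is the minimizer over `A` of the Hamiltonian
    (ahat : ℝ → Fin n → ℝ → (Fin n → ℝ) → ℝ)
    (hahat : ∀ (t : ℝ) (e : Fin n) (z : ℝ) (h : Fin n → ℝ), ahat t e z h ∈ Icc lo hi ∧
      ∀ b ∈ Icc lo hi,
        (∑ e', q e e' (ahat t e z h) z * h e') + f t e z (ahat t e z h) ≤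
        (∑ e', q e e' b z * h e') + f t e z b) :
    ∀ e : Fin n,
      ContinuousOn (fun v : ℝ × ℝ × (Fin n → ℝ) => ahat v.1 e v.2.1 v.2.2)
        (Icc (0:ℝ) T ×ˢ (univ : Set ℝ) ×ˢ (univ : Set (Fin n → ℝ))) ∧
      ∀ Cz > (0:ℝ), ∀ Ch > (0:ℝ), ∃ L : ℝ,
        ∀ t ∈ Icc (0:ℝ) T, ∀ t' ∈ Icc (0:ℝ) T,
        ∀ z ∈ Icc (-Cz) Cz, ∀ z' ∈ Icc (-Cz) Cz,
        ∀ h h' : Fin n → ℝ, (∀ e', |h e'| ≤ Ch) → (∀ e', |h' e'| ≤ Ch) →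
          |ahat t e z h - ahat t' e z' h'| ≤
            L * (|t - t'| + |z - z'| + ⨆ e' : Fin n, |h e' - h' e'|) :=
  stmt_4_general n T lo hi q Q1 Q2 hqdecomp hQ2lip f fa hfa lam hlam hconv hfalip ahat hahat
end

section
/- (A priori bound for solutions of the HJB equation.) Assume |q_{i,j}(a,z)| ≤ q_max for all i,j ∈ E, a ∈ A, z ∈ ℝ, |f(t,e,z,a)| ≤ C_f, and |g(e,z)| ≤ C_g. Let Z : [0,T] → ℝ be continuous and let u : [0,T]×E → ℝ be continuously differentiable in t and solve u̇(t,e) + Ĥ(t,e,Z_t, Δ_e u(t,·)) = 0 with u(T,e) = g(e, Z_T). Then for all t ∈ [0,T]: max_{e∈E} |u(t,e)| ≤ (C_g + C_f (T − t)) e^{2(n−1) q_max (T − t)}. In particular, |u̇(t,e)| ≤ 2(n−1)q_max (C_g + C_f T) e^{2(n−1)q_max T} + C_f for all (t,e), so u is Lipschitz in t with a constant depending only on n, q_max, C_f, C_g, T. -/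
open Set Real

/-!
Because the minimum in `Ĥ` is attained and the diagonal term of `1_e Q Δ_e u` vanishes,
the equation gives `|u̇(t,e)| ≤ 2(n-1) q_max ‖u(t)‖_∞ + C_f`. Grönwall's inequality, run backwards
from the terminal time where `‖u(T)‖_∞ ≤ C_g`, turns this into the bound on `‖u(t)‖_∞`; since
`(δ + ε τ) e^{Kτ}` dominates the Grönwall bound and increases in `τ`, it also bounds `u̇`.
-/

lemma exp_sub_one_le_mul_exp (y : ℝ) : exp y - 1 ≤ y * exp y := by
  have h := mul_le_mul_of_nonneg_right (one_sub_le_exp_neg y) (exp_pos y).le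
  rw [← exp_add, neg_add_cancel, exp_zero] at h
  linarith

lemma gronwallBound_le_add_mul_mul_exp {δ K ε : ℝ} (hK : 0 ≤ K) (hε : 0 ≤ ε) (x : ℝ) :
    gronwallBound δ K ε x ≤ (δ + ε * x) * exp (K * x) := by
  rcases hK.eq_or_lt with rfl | hK
  · simp [gronwallBound_K0]
  rw [gronwallBound_of_K_ne_0 hK.ne', add_mul, mul_assoc ε]
  refine add_le_add_right ?_ _
  rw [div_mul_eq_mul_div, div_le_iff₀ hK]
  calc ε * (exp (K * x) - 1) ≤ ε * (K * x * exp (K * x)) :=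
        mul_le_mul_of_nonneg_left (exp_sub_one_le_mul_exp _) hε
    _ = ε * (x * exp (K * x)) * K := by ring

section
variable {E : Type*} [NormedAddCommGroup E] [NormedSpace ℝ E]

theorem norm_le_gronwallBound_of_norm_deriv_le_backward {f f' : ℝ → E} {δ K ε a b : ℝ}
    (hf : ∀ t ∈ Icc a b, HasDerivWithinAt f (f' t) (Icc a b) t) (hb : ‖f b‖ ≤ δ)
    (bound : ∀ t ∈ Icc a b, ‖f' t‖ ≤ K * ‖f t‖ + ε) :
    ∀ t ∈ Icc a b, ‖f t‖ ≤ gronwallBound δ K ε (b - t) := by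
  have hrefl : MapsTo (fun s => a + b - s) (Icc a b) (Icc a b) := fun s hs =>
    ⟨by linarith [hs.2], by linarith [hs.1]⟩
  have hderiv : ∀ s ∈ Icc a b,
      HasDerivWithinAt (fun s => f (a + b - s)) (-f' (a + b - s)) (Icc a b) s := fun s hs => by
    simpa [Function.comp_def] using
      (hf _ (hrefl hs)).scomp s ((hasDerivAt_id s).const_sub (a + b)).hasDerivWithinAt hrefl
  intro t ht
  have hreversed := norm_le_gronwallBound_of_norm_deriv_right_le
    (fun s hs => (hderiv s hs).continuousWithinAt)
    (fun s hs => (hderiv s (Ico_subset_Icc_self hs)).mono_of_mem_nhdsWithin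
      (Icc_mem_nhdsGE_of_mem hs))
    (by simpa using hb) (fun s hs => by simpa using bound _ (hrefl (Ico_subset_Icc_self hs)))
    (a + b - t) (hrefl ht)
  simpa [show a + b - t - a = b - t by ring] using hreversed

theorem norm_le_add_mul_mul_exp_of_norm_deriv_le {f f' : ℝ → E} {δ K ε a b : ℝ}
    (hf : ∀ t ∈ Icc a b, HasDerivWithinAt f (f' t) (Icc a b) t) (hK : 0 ≤ K) (hε : 0 ≤ ε)
    (hb : ‖f b‖ ≤ δ) (bound : ∀ t ∈ Icc a b, ‖f' t‖ ≤ K * ‖f t‖ + ε) (t : ℝ) (ht : t ∈ Icc a b) :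
    ‖f t‖ ≤ (δ + ε * (b - t)) * exp (K * (b - t)) :=
  (norm_le_gronwallBound_of_norm_deriv_le_backward hf hb bound t ht).trans
    (gronwallBound_le_add_mul_mul_exp hK hε _)
end

lemma abs_sum_mul_sub_le {ι : Type*} [Fintype ι] {r : ι → ℝ} {qmax : ℝ}
    (hr : ∀ j, |r j| ≤ qmax) (x : ι → ℝ) (e : ι) :
    |∑ j, r j * (x j - x e)| ≤ 2 * ((Fintype.card ι : ℝ) - 1) * qmax * ‖x‖ := by
  classical
  have hqmax : 0 ≤ qmax := (abs_nonneg _).trans (hr e)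
  have hx : ∀ j, |x j - x e| ≤ 2 * ‖x‖ := fun j => (abs_sub _ _).trans <| by
    rw [two_mul]
    exact add_le_add (norm_le_pi_norm x j) (norm_le_pi_norm x e)
  rw [← Finset.sum_erase (f := fun j => r j * (x j - x e)) _ (by simp : r e * (x e - x e) = 0)]
  calc |∑ j ∈ Finset.univ.erase e, r j * (x j - x e)|
      ≤ ∑ j ∈ Finset.univ.erase e, |r j * (x j - x e)| := Finset.abs_sum_le_sum_abs _ _
    _ ≤ ∑ j ∈ Finset.univ.erase e, qmax * (2 * ‖x‖) := by
        gcongr with j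
        rw [abs_mul]
        exact mul_le_mul (hr j) (hx j) (abs_nonneg _) hqmax
    _ = 2 * ((Fintype.card ι : ℝ) - 1) * qmax * ‖x‖ := by
        rw [Finset.sum_const, nsmul_eq_mul, Finset.card_erase_of_mem (Finset.mem_univ e),
          Finset.card_univ, Nat.cast_sub (Fintype.card_pos_iff.2 ⟨e⟩)]
        ring

theorem stmt_11_general (n : ℕ) (T : ℝ)
    (A : Set ℝ)
    (q : Fin n → Fin n → ℝ → ℝ → ℝ) (qmax : ℝ)
    (hq : ∀ i j z, ∀ a ∈ A, |q i j a z| ≤ qmax)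
    (f : ℝ → Fin n → ℝ → ℝ → ℝ) (Cf : ℝ) (hf : ∀ t e z, ∀ a ∈ A, |f t e z a| ≤ Cf)
    (g : Fin n → ℝ → ℝ) (Cg : ℝ) (hg : ∀ e z, |g e z| ≤ Cg)
    (Hhat : ℝ → Fin n → ℝ → (Fin n → ℝ) → ℝ)
    (hHhat : ∀ (t : ℝ) (e : Fin n) (z : ℝ) (h : Fin n → ℝ), ∃ a ∈ A,
      Hhat t e z h = (∑ e', q e e' a z * h e') + f t e z a ∧
      ∀ b ∈ A, Hhat t e z h ≤ (∑ e', q e e' b z * h e') + f t e z b)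
    (Z : ℝ → ℝ)
    (u u' : ℝ → Fin n → ℝ)
    (hu : ∀ t ∈ Icc (0:ℝ) T, ∀ e, HasDerivWithinAt (fun s => u s e) (u' t e) (Icc 0 T) t)
    (hHJB : ∀ t ∈ Icc (0:ℝ) T, ∀ e,
      u' t e + Hhat t e (Z t) (fun e' => u t e' - u t e) = 0)
    (huT : ∀ e, u T e = g e (Z T)) :
    (∀ t ∈ Icc (0:ℝ) T, ∀ e,
      |u t e| ≤ (Cg + Cf * (T - t)) * Real.exp (2 * ((n : ℝ) - 1) * qmax * (T - t))) ∧
    (∀ t ∈ Icc (0:ℝ) T, ∀ e,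
      |u' t e| ≤ 2 * ((n : ℝ) - 1) * qmax * (Cg + Cf * T) *
        Real.exp (2 * ((n : ℝ) - 1) * qmax * T) + Cf) := by
  rcases isEmpty_or_nonempty (Fin n) with _ | ⟨⟨e₀⟩⟩
  · simp
  set K := 2 * ((n : ℝ) - 1) * qmax
  obtain ⟨a₀, ha₀, -⟩ := hHhat 0 e₀ 0 0
  have hK : 0 ≤ K := by
    have hn : (1 : ℝ) ≤ n := by exact_mod_cast e₀.pos
    have hqmax : 0 ≤ qmax := (abs_nonneg _).trans (hq e₀ e₀ 0 a₀ ha₀)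
    exact mul_nonneg (mul_nonneg zero_le_two (sub_nonneg.2 hn)) hqmax
  have hCf : 0 ≤ Cf := (abs_nonneg _).trans (hf 0 e₀ 0 a₀ ha₀)
  have hCg : 0 ≤ Cg := (abs_nonneg _).trans (hg e₀ 0)
  have hrate : ∀ t ∈ Icc 0 T, ∀ e, |u' t e| ≤ K * ‖u t‖ + Cf := by
    intro t ht e
    obtain ⟨a, ha, hHa, -⟩ := hHhat t e (Z t) (fun e' => u t e' - u t e)
    rw [eq_neg_of_add_eq_zero_left (hHJB t ht e), abs_neg, hHa]
    refine (abs_add_le _ _).trans (add_le_add ?_ (hf t e _ a ha))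
    simpa using abs_sum_mul_sub_le (fun j => hq e j (Z t) a ha) (u t) e
  have hnorm : ∀ t ∈ Icc 0 T, ‖u t‖ ≤ (Cg + Cf * (T - t)) * exp (K * (T - t)) :=
    norm_le_add_mul_mul_exp_of_norm_deriv_le (fun t ht => hasDerivWithinAt_pi.2 (hu t ht)) hK
      hCf ((pi_norm_le_iff_of_nonneg hCg).2 fun e => by simpa [huT] using hg e (Z T))
      fun t ht => (pi_norm_le_iff_of_nonneg (by positivity)).2 (hrate t ht)
  refine ⟨fun t ht e => (norm_le_pi_norm (u t) e).trans (hnorm t ht), fun t ht e => ?_⟩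
  calc |u' t e| ≤ K * ‖u t‖ + Cf := hrate t ht e
    _ ≤ K * ((Cg + Cf * T) * exp (K * T)) + Cf := by
        have hmono : (Cg + Cf * (T - t)) * exp (K * (T - t)) ≤ (Cg + Cf * T) * exp (K * T) := by
          have := mul_nonneg hCf (ht.1.trans ht.2)
          gcongr <;> linarith [ht.1]
        gcongr
        exact (hnorm t ht).trans hmono
    _ = K * (Cg + Cf * T) * exp (K * T) + Cf := by ring

/-- A priori bound for solutions of the HJB equation: if `u` solves
`u̇(t,e) + Ĥ(t,e,Z_t,Δ_e u(t,·)) = 0` with `u(T,e) = g(e,Z_T)`, where the rates are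
bounded by `q_max`, `|f| ≤ C_f` and `|g| ≤ C_g`, then
`max_e |u(t,e)| ≤ (C_g + C_f(T−t)) e^{2(n−1)q_max(T−t)}`, and the time derivative of `u`
is bounded by `2(n−1)q_max(C_g + C_f T)e^{2(n−1)q_max T} + C_f`. -/
theorem stmt_11 (n : ℕ) (hn : 2 ≤ n) (T : ℝ) (hT : 0 < T)
    (A : Set ℝ) (hA : IsCompact A) (hAne : A.Nonempty)
    (q : Fin n → Fin n → ℝ → ℝ → ℝ) (qmax : ℝ)
    (hq : ∀ i j z, ∀ a ∈ A, |q i j a z| ≤ qmax)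
    (hQmat : ∀ a ∈ A, ∀ z : ℝ, (∀ i j, i ≠ j → 0 ≤ q i j a z) ∧ ∀ i, ∑ j, q i j a z = 0)
    (f : ℝ → Fin n → ℝ → ℝ → ℝ) (Cf : ℝ) (hf : ∀ t e z, ∀ a ∈ A, |f t e z a| ≤ Cf)
    (g : Fin n → ℝ → ℝ) (Cg : ℝ) (hg : ∀ e z, |g e z| ≤ Cg)
    (Hhat : ℝ → Fin n → ℝ → (Fin n → ℝ) → ℝ)
    (hHhat : ∀ (t : ℝ) (e : Fin n) (z : ℝ) (h : Fin n → ℝ), ∃ a ∈ A,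
      Hhat t e z h = (∑ e', q e e' a z * h e') + f t e z a ∧
      ∀ b ∈ A, Hhat t e z h ≤ (∑ e', q e e' b z * h e') + f t e z b)
    (Z : ℝ → ℝ) (hZ : ContinuousOn Z (Icc 0 T))
    (u u' : ℝ → Fin n → ℝ)
    (hu : ∀ t ∈ Icc (0:ℝ) T, ∀ e, HasDerivWithinAt (fun s => u s e) (u' t e) (Icc 0 T) t)
    (hu'c : ∀ e, ContinuousOn (fun t => u' t e) (Icc 0 T))
    (hHJB : ∀ t ∈ Icc (0:ℝ) T, ∀ e,
      u' t e + Hhat t e (Z t) (fun e' => u t e' - u t e) = 0)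
    (huT : ∀ e, u T e = g e (Z T)) :
    (∀ t ∈ Icc (0:ℝ) T, ∀ e,
      |u t e| ≤ (Cg + Cf * (T - t)) * Real.exp (2 * ((n : ℝ) - 1) * qmax * (T - t))) ∧
    (∀ t ∈ Icc (0:ℝ) T, ∀ e,
      |u' t e| ≤ 2 * ((n : ℝ) - 1) * qmax * (Cg + Cf * T) *
        Real.exp (2 * ((n : ℝ) - 1) * qmax * T) + Cf) :=
  stmt_11_general n T A q qmax hq f Cf hf g Cg hg Hhat hHhat Z u u' hu hHJB huT
end

section
/- (L² stability of the Kolmogorov forward equation with respect to the rates.) Let q, q̃ : I×[0,T] → ℝ^{E×E} be measurable with |q^x_{e',e}(t)| ≤ q_max and |q̃^x_{e',e}(t)| ≤ q_max, continuous in t for almost every x, and let p, p̃ ∈ C([0,T]; L²(I×E)) satisfy, for almost every x, d/dt p^x(t,e) = Σ_{e'∈E} q^x_{e',e}(t) p^x(t,e') and d/dt p̃^x(t,e) = Σ_{e'∈E} q̃^x_{e',e}(t) p̃^x(t,e'), with common initial datum p(0) = p̃(0) = p₀, where p₀^x and hence p^x(t,·), p̃^x(t,·) are probability vectors on E for almost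 every x and all t. Then there exists a constant C, depending only on n, q_max and T, such that for all s ∈ [0,T]: ∫_I Σ_{e∈E} |p^x(s,e) − p̃^x(s,e)|² dx ≤ C ∫₀^s ∫_I Σ_{e,e'∈E} |q^x_{e',e}(t) − q̃^x_{e',e}(t)|² dx dt. -/
/-!
For almost every `x`, the squared distance `f t = ∑ e, (p x t e - pt x t e) ^ 2` satisfies
`f' ≤ K f + ∑ e, ∑ e', (q - qt) ^ 2` with `K = 2 n |qmax| + 1`. Indeed
`∑ e', q p - ∑ e', qt pt = ∑ e', q (p - pt) + ∑ e', (q - qt) pt`; the first part is controlled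
by the rate bound and `(∑ |d|)² ≤ n ∑ d²`, the second by Cauchy–Schwarz against the probability
vector `pt`, whose squared ℓ² norm is at most `1`. Grönwall's inequality with `f 0 = 0` bounds
`f s` by `exp (K T) ∫₀ˢ ∑ (q - qt)²`, and Fubini for the bounded integrand exchanges the
integrals in `x` and `t`.
-/

open MeasureTheory Set

/-- The unit interval `I = [0,1]` with Lebesgue measure. -/
noncomputable def muI : Measure ℝ := volume.restrict (Set.Icc 0 1)

section

open Finset Real

theorem sum_mul_sum_mul_le_card_mul_sum_sq {ι : Type*} [Fintype ι] {c : ℝ} {Q : ι → ι → ℝ}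
    (hQ : ∀ i j, |Q i j| ≤ c) (d : ι → ℝ) :
    ∑ j, d j * ∑ i, Q i j * d i ≤ Fintype.card ι * c * ∑ i, d i ^ 2 := by
  obtain hι | ⟨⟨i₀⟩⟩ := isEmpty_or_nonempty ι
  · simp
  have hc : 0 ≤ c := (abs_nonneg _).trans (hQ i₀ i₀)
  calc ∑ j, d j * ∑ i, Q i j * d i ≤ ∑ j, ∑ i, c * (|d i| * |d j|) := by
        refine sum_le_sum fun j _ => ?_
        rw [mul_sum]
        refine sum_le_sum fun i _ => ?_
        calc d j * (Q i j * d i) ≤ |Q i j| * (|d i| * |d j|) := by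
              rw [← abs_mul, ← abs_mul]; exact (le_abs_self _).trans_eq (by ring_nf)
          _ ≤ c * (|d i| * |d j|) := by gcongr; exact hQ i j
    _ = c * (∑ i, |d i|) ^ 2 := by rw [sq, sum_mul_sum, mul_sum, sum_comm]; simp only [mul_sum]
    _ ≤ c * (Fintype.card ι * ∑ i, d i ^ 2) := by
        gcongr
        simpa using sq_sum_le_card_mul_sum_sq (s := univ) (f := fun i => |d i|)
    _ = Fintype.card ι * c * ∑ i, d i ^ 2 := by ring

theorem sq_sum_mul_le_sum_sq {ι : Type*} [Fintype ι] {v : ι → ℝ} (hv0 : ∀ i, 0 ≤ v i)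
    (hv1 : ∑ i, v i = 1) (a : ι → ℝ) : (∑ i, a i * v i) ^ 2 ≤ ∑ i, a i ^ 2 := by
  have hv_sq : ∑ i, v i ^ 2 ≤ 1 := hv1 ▸ sum_le_sum fun i _ => by
    have : v i ≤ 1 := hv1 ▸ single_le_sum (fun j _ => hv0 j) (mem_univ i)
    nlinarith [hv0 i]
  calc (∑ i, a i * v i) ^ 2 ≤ (∑ i, a i ^ 2) * ∑ i, v i ^ 2 := sum_mul_sq_le_sq_mul_sq _ _ _
    _ ≤ ∑ i, a i ^ 2 := mul_le_of_le_one_right (sum_nonneg fun i _ => sq_nonneg _) hv_sq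

theorem kolmogorov_deriv_sq_dist_le {ι : Type*} [Fintype ι] {c : ℝ} {Q Q' : ι → ι → ℝ}
    (hQ : ∀ i j, |Q i j| ≤ c) (v : ι → ℝ) {v' : ι → ℝ} (hv'0 : ∀ i, 0 ≤ v' i)
    (hv'1 : ∑ i, v' i = 1) :
    ∑ j, 2 * (v j - v' j) * (∑ i, Q i j * v i - ∑ i, Q' i j * v' i) ≤
      (2 * Fintype.card ι * c + 1) * ∑ j, (v j - v' j) ^ 2 + ∑ j, ∑ i, (Q i j - Q' i j) ^ 2 := by
  set d := fun j => v j - v' j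
  set B := fun j => ∑ i, (Q i j - Q' i j) * v' i
  have hsplit : ∀ j, ∑ i, Q i j * v i - ∑ i, Q' i j * v' i = ∑ i, Q i j * d i + B j := by
    intro j
    simp only [d, B, ← sum_sub_distrib, ← sum_add_distrib]
    exact sum_congr rfl fun i _ => by ring
  have hB : ∀ j, 2 * d j * B j ≤ d j ^ 2 + ∑ i, (Q i j - Q' i j) ^ 2 := fun j => by
    nlinarith [two_mul_le_add_sq (d j) (B j),
      sq_sum_mul_le_sum_sq hv'0 hv'1 (fun i => Q i j - Q' i j)]
  calc ∑ j, 2 * d j * (∑ i, Q i j * v i - ∑ i, Q' i j * v' i)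
        = 2 * ∑ j, d j * ∑ i, Q i j * d i + ∑ j, 2 * d j * B j := by
          simp only [hsplit, mul_add, sum_add_distrib, mul_sum]; ring_nf
    _ ≤ 2 * (Fintype.card ι * c * ∑ j, d j ^ 2) + ∑ j, (d j ^ 2 + ∑ i, (Q i j - Q' i j) ^ 2) := by
          gcongr with j
          · exact sum_mul_sum_mul_le_card_mul_sum_sq hQ d
          · exact hB j
    _ = _ := by rw [sum_add_distrib]; ring

theorem le_exp_mul_add_integral_of_deriv_le {f f' g : ℝ → ℝ} {K a b : ℝ} (hK : 0 ≤ K)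
    (hab : a ≤ b) (hf : ContinuousOn f (Icc a b))
    (hf' : ∀ t ∈ Ioo a b, HasDerivWithinAt f (f' t) (Ioi t) t)
    (hg : IntegrableOn g (Icc a b)) (hg0 : ∀ t ∈ Ioo a b, 0 ≤ g t)
    (hbound : ∀ t ∈ Ioo a b, f' t ≤ K * f t + g t) :
    f b ≤ exp (K * (b - a)) * (f a + ∫ t in a..b, g t) := by
  set w : ℝ → ℝ := fun t => exp (-K * (t - a))
  have hw : ∀ t, HasDerivAt w (-K * w t) t := fun t => by
    simpa [w, mul_comm] using ((hasDerivAt_id t).sub_const a |>.const_mul (-K)).exp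
  have hwf : w b * f b - w a * f a ≤ ∫ t in a..b, g t := by
    refine intervalIntegral.sub_le_integral_of_hasDeriv_right_of_le hab
      ((continuous_exp.comp (by fun_prop)).continuousOn.mul hf)
      (fun t ht => (hw t).hasDerivWithinAt.mul (hf' t ht)) hg fun t ht => ?_
    have hw1 : w t ≤ 1 := exp_le_one_iff.2 (by nlinarith [ht.1])
    nlinarith [hbound t ht, hg0 t ht, exp_pos (-K * (t - a))]
  have hwa : w a = 1 := by simp [w]
  rw [hwa, one_mul] at hwf
  have hwb : exp (K * (b - a)) * w b = 1 := by rw [← exp_add]; simp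
  calc f b = exp (K * (b - a)) * (w b * f b) := by rw [← mul_assoc, hwb, one_mul]
    _ ≤ exp (K * (b - a)) * (f a + ∫ t in a..b, g t) := by
      gcongr
      linarith

theorem sum_sq_sub_le_exp_mul_integral_of_kolmogorov {ι : Type*} [Fintype ι] {T c s : ℝ}
    {q q' : ℝ → ι → ι → ℝ} {p p' : ℝ → ι → ℝ} (hq : ∀ t ∈ Icc 0 T, ∀ i j, |q t i j| ≤ c)
    (hqc : ∀ i j, ContinuousOn (fun t => q t i j) (Icc 0 T))
    (hq'c : ∀ i j, ContinuousOn (fun t => q' t i j) (Icc 0 T))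
    (hp : ∀ t ∈ Icc 0 T, ∀ j,
      HasDerivWithinAt (fun t => p t j) (∑ i, q t i j * p t i) (Icc 0 T) t)
    (hp' : ∀ t ∈ Icc 0 T, ∀ j,
      HasDerivWithinAt (fun t => p' t j) (∑ i, q' t i j * p' t i) (Icc 0 T) t)
    (hp'prob : ∀ t ∈ Icc 0 T, (∀ i, 0 ≤ p' t i) ∧ ∑ i, p' t i = 1)
    (h0 : ∀ i, p 0 i = p' 0 i) (hs : s ∈ Icc 0 T) :
    ∑ j, (p s j - p' s j) ^ 2 ≤ exp ((2 * Fintype.card ι * |c| + 1) * T) *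
      ∫ t in 0..s, ∑ j, ∑ i, (q t i j - q' t i j) ^ 2 := by
  set f := fun t => ∑ j, (p t j - p' t j) ^ 2
  set g := fun t => ∑ j, ∑ i, (q t i j - q' t i j) ^ 2
  set K := 2 * Fintype.card ι * |c| + 1
  have hK : 0 ≤ K := by positivity
  have hsT : Icc 0 s ⊆ Icc 0 T := Icc_subset_Icc_right hs.2
  have hIoo : Ioo 0 s ⊆ Icc 0 T := Ioo_subset_Icc_self.trans hsT
  have hf : ∀ t ∈ Icc 0 T, HasDerivWithinAt f (∑ j, 2 * (p t j - p' t j) *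
      (∑ i, q t i j * p t i - ∑ i, q' t i j * p' t i)) (Icc 0 T) t := fun t ht => by
    refine (HasDerivWithinAt.fun_sum (u := univ) fun j _ =>
      ((hp t ht j).sub (hp' t ht j)).pow 2).congr_deriv (sum_congr rfl fun j _ => ?_)
    simp only [Pi.sub_apply]
    push_cast
    ring
  have hg : ContinuousOn g (Icc 0 T) := by fun_prop
  have hg0 : ∀ t, 0 ≤ g t := fun t => by positivity
  have hgron := le_exp_mul_add_integral_of_deriv_le hK hs.1
    (fun t ht => (hf t (hsT ht)).continuousWithinAt.mono hsT)
    (fun t ht => ((hf t (hIoo ht)).hasDerivAt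
      (Icc_mem_nhds ht.1 (ht.2.trans_le hs.2))).hasDerivWithinAt)
    ((hg.mono hsT).integrableOn_Icc) (fun t _ => hg0 t)
    (fun t ht => kolmogorov_deriv_sq_dist_le
      (fun i j => (hq t (hIoo ht) i j).trans (le_abs_self c)) (p t)
      (hp'prob t (hIoo ht)).1 (hp'prob t (hIoo ht)).2)
  have hf0 : f 0 = 0 := by simp [f, h0]
  rw [hf0, zero_add, sub_zero] at hgron
  refine hgron.trans ?_
  gcongr
  · exact intervalIntegral.integral_nonneg hs.1 fun t _ => hg0 t
  · exact hs.2

end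

theorem integral_le_mul_intervalIntegral_integral {X : Type*} [MeasurableSpace X]
    {μ : Measure X} [IsFiniteMeasure μ] {F : X → ℝ} {G : X → ℝ → ℝ} {C M s : ℝ} (hs : 0 ≤ s)
    (hG : Measurable (Function.uncurry G)) (hGM : ∀ x t, |G x t| ≤ M) (hF : 0 ≤ᵐ[μ] F)
    (hFG : ∀ᵐ x ∂μ, F x ≤ C * ∫ t in 0..s, G x t) :
    ∫ x, F x ∂μ ≤ C * ∫ t in 0..s, ∫ x, G x t ∂μ := by
  have : IsFiniteMeasure (volume.restrict (Ioc 0 s)) :=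
    isFiniteMeasure_restrict.2 measure_Ioc_lt_top.ne
  have hGint : Integrable (Function.uncurry G) (μ.prod (volume.restrict (Ioc 0 s))) :=
    .of_bound hG.aestronglyMeasurable M (ae_of_all _ fun v => hGM v.1 v.2)
  simp only [intervalIntegral.integral_of_le hs] at hFG ⊢
  calc ∫ x, F x ∂μ ≤ ∫ x, C * (∫ t in Ioc 0 s, G x t) ∂μ :=
        integral_mono_of_nonneg hF (hGint.integral_prod_left.const_mul C) hFG
    _ = C * ∫ t in Ioc 0 s, ∫ x, G x t ∂μ := by
        rw [integral_const_mul, integral_integral_swap hGint]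

instance : IsFiniteMeasure muI :=
  isFiniteMeasure_restrict.2 measure_Icc_lt_top.ne

theorem stmt_15_general (n : ℕ) (T qmax : ℝ) :
    ∃ C : ℝ, ∀ (q qt : ℝ → ℝ → Fin n → Fin n → ℝ)   -- q x t e' e  and  q̃ x t e' e
      (p pt : ℝ → ℝ → Fin n → ℝ) (p0 : ℝ → Fin n → ℝ),
      (∀ e' e, Measurable fun v : ℝ × ℝ => q v.1 v.2 e' e) →
      (∀ e' e, Measurable fun v : ℝ × ℝ => qt v.1 v.2 e' e) →
      (∀ x t e' e, |q x t e' e| ≤ qmax) →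
      (∀ x t e' e, |qt x t e' e| ≤ qmax) →
      (∀ᵐ x ∂muI, ∀ e' e, ContinuousOn (fun t => q x t e' e) (Icc 0 T) ∧
        ContinuousOn (fun t => qt x t e' e) (Icc 0 T)) →
      (∀ t ∈ Icc (0:ℝ) T, ∀ e, AEMeasurable (fun x => p x t e) muI ∧
        AEMeasurable (fun x => pt x t e) muI) →
      (∀ᵐ x ∂muI, ∀ t ∈ Icc (0:ℝ) T, ∀ e,
        HasDerivWithinAt (fun s => p x s e) (∑ e', q x t e' e * p x t e') (Icc 0 T) t ∧
        HasDerivWithinAt (fun s => pt x s e) (∑ e', qt x t e' e * pt x t e') (Icc 0 T) t) →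
      (∀ᵐ x ∂muI, ∀ e, p x 0 e = p0 x e ∧ pt x 0 e = p0 x e) →
      (∀ᵐ x ∂muI, ∀ t ∈ Icc (0:ℝ) T,
        (∀ e, 0 ≤ p x t e ∧ 0 ≤ pt x t e) ∧ ∑ e, p x t e = 1 ∧ ∑ e, pt x t e = 1) →
      ∀ s ∈ Icc (0:ℝ) T,
        (∫ x, ∑ e, (p x s e - pt x s e) ^ 2 ∂muI)
          ≤ C * ∫ t in (0:ℝ)..s, ∫ x, ∑ e, ∑ e', (q x t e' e - qt x t e' e) ^ 2 ∂muI := by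
  refine ⟨Real.exp ((2 * n * |qmax| + 1) * T), ?_⟩
  intro q qt p pt p0 hqm hqtm hqb hqtb hqc _ hderiv hinit hprob s hs
  have hsq : ∀ x t e' e, (q x t e' e - qt x t e' e) ^ 2 ≤ (2 * qmax) ^ 2 := fun x t e' e => by
    nlinarith [abs_le.1 (hqb x t e' e), abs_le.1 (hqtb x t e' e)]
  refine integral_le_mul_intervalIntegral_integral (M := n * (n * (2 * qmax) ^ 2)) hs.1
    (by fun_prop) (fun x t => ?_) (ae_of_all _ fun x => by positivity) ?_
  · rw [abs_of_nonneg (by positivity)]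
    refine (Finset.sum_le_sum fun e _ => Finset.sum_le_sum fun e' _ => hsq x t e' e).trans_eq ?_
    simp
  filter_upwards [hqc, hderiv, hinit, hprob] with x hqcx hderx hinitx hprobx
  simpa using sum_sq_sub_le_exp_mul_integral_of_kolmogorov (fun t _ => hqb x t)
    (fun e' e => (hqcx e' e).1) (fun e' e => (hqcx e' e).2)
    (fun t ht e => (hderx t ht e).1) (fun t ht e => (hderx t ht e).2)
    (fun t ht => ⟨fun e => ((hprobx t ht).1 e).2, (hprobx t ht).2.2⟩)
    (fun e => (hinitx e).1.trans (hinitx e).2.symm) hs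

/-- L² stability of the Kolmogorov forward equation with respect to the rates: there is a
constant `C`, depending only on `n`, `q_max` and `T`, such that two solution flows with
rates `q`, `q̃` (both bounded by `q_max`), the same initial datum, and probability-vector
values satisfy
`∫_I Σ_e |p^x(s,e) − p̃^x(s,e)|² dx ≤ C ∫₀^s ∫_I Σ_{e,e'} |q^x_{e',e}(t) − q̃^x_{e',e}(t)|² dx dt`. -/
theorem stmt_15 (n : ℕ) (hn : 2 ≤ n) (T qmax : ℝ) (hT : 0 < T) :
    ∃ C : ℝ, ∀ (q qt : ℝ → ℝ → Fin n → Fin n → ℝ)   -- q x t e' e  and  q̃ x t e' e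
      (p pt : ℝ → ℝ → Fin n → ℝ) (p0 : ℝ → Fin n → ℝ),
      (∀ e' e, Measurable fun v : ℝ × ℝ => q v.1 v.2 e' e) →
      (∀ e' e, Measurable fun v : ℝ × ℝ => qt v.1 v.2 e' e) →
      (∀ x t e' e, |q x t e' e| ≤ qmax) →
      (∀ x t e' e, |qt x t e' e| ≤ qmax) →
      (∀ᵐ x ∂muI, ∀ e' e, ContinuousOn (fun t => q x t e' e) (Icc 0 T) ∧
        ContinuousOn (fun t => qt x t e' e) (Icc 0 T)) →
      (∀ t ∈ Icc (0:ℝ) T, ∀ e, AEMeasurable (fun x => p x t e) muI ∧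
        AEMeasurable (fun x => pt x t e) muI) →
      (∀ᵐ x ∂muI, ∀ t ∈ Icc (0:ℝ) T, ∀ e,
        HasDerivWithinAt (fun s => p x s e) (∑ e', q x t e' e * p x t e') (Icc 0 T) t ∧
        HasDerivWithinAt (fun s => pt x s e) (∑ e', qt x t e' e * pt x t e') (Icc 0 T) t) →
      (∀ᵐ x ∂muI, ∀ e, p x 0 e = p0 x e ∧ pt x 0 e = p0 x e) →
      (∀ᵐ x ∂muI, ∀ t ∈ Icc (0:ℝ) T,
        (∀ e, 0 ≤ p x t e ∧ 0 ≤ pt x t e) ∧ ∑ e, p x t e = 1 ∧ ∑ e, pt x t e = 1) →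
      ∀ s ∈ Icc (0:ℝ) T,
        (∫ x, ∑ e, (p x s e - pt x s e) ^ 2 ∂muI)
          ≤ C * ∫ t in (0:ℝ)..s, ∫ x, ∑ e, ∑ e', (q x t e' e - qt x t e' e) ^ 2 ∂muI :=
  stmt_15_general n T qmax
end
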